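/- arXiv:2209.10727 — 2 statements merged into one kernel-verified Lean document; each statement's English description precedes it below -/
import Mathlib

section
/- Let α > −1/2 and γ ∈ ℝ, and let M_n(x;α,γ) be the −1 Meixner–Pollaczek polynomials. Then for all n, m ∈ ℕ, ∫_{\{x ∈ ℝ : |x| ≥ |γ|\}} sgn(x)·(x+γ)·(x²−γ²)^{α−1/2}·e^{−x²}·M_n(x;α,γ)·M_m(x;α,γ) dx = h_n·δ_{nm}, where h_{2m} = m!·e^{−γ²}·Γ(m+α+1/2) and h_{2m+1} = m!·e^{−γ²}·Γ(m+α+3/2). -/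
/-!
Write `M_{2a} = c_a L_a(x² - γ²)` and `M_{2a+1} = c'_a (x - γ) L'_a(x² - γ²)`, where `L_a`, `L'_a`
are the Laguerre-type polynomials `₁F₁(-a; s; ·)` with `s = α + 1/2`, resp. `s = α + 3/2`.
Adding the contributions of `x` and `-x` for `x > |γ|`, the factor `sgn(x)(x + γ)` of the weight
becomes `2x` when both indices are even, `2x(x² - γ²)` when both are odd, and cancels when the
parities differ. The substitution `u = x² - γ²` then reduces everything to the Laguerre
orthogonality `∫₀^∞ u^(s-1) e^(-u) L_a L_b du = δ_ab a! Γ(s) / (s)_a`. That in turn follows from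
the moments: `∫₀^∞ u^(s-1) e^(-u) u^j L_a du` is `Γ(s)` times the `a`-th finite difference of the
degree-`j` polynomial `k ↦ (s + k)_j`, which vanishes for `j < a`.
-/

open Polynomial Finset MeasureTheory

/-- The Pochhammer symbol `(a)ₖ = a(a+1)⋯(a+k-1)` for real `a`. -/
noncomputable def pochR (a : ℝ) (k : ℕ) : ℝ := (ascPochhammer ℝ k).eval a

/-- The `-1` Meixner–Pollaczek polynomials `Mₙ(x;α,γ)`, given by their explicit
terminating ₁F₁-type hypergeometric expressions. -/
noncomputable def M1MP (α γ : ℝ) (n : ℕ) : Polynomial ℝ :=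
  let m : ℕ := n / 2
  if Even n then
    C ((-1 : ℝ) ^ m * pochR (α + 1 / 2) m) *
      ∑ k ∈ range (m + 1),
        C (pochR (-(m : ℝ)) k / (pochR (α + 1 / 2) k * (k.factorial : ℝ))) *
          (X ^ 2 - C (γ ^ 2)) ^ k
  else
    C ((-1 : ℝ) ^ m * pochR (α + 3 / 2) m) * (X - C γ) *
      ∑ k ∈ range (m + 1),
        C (pochR (-(m : ℝ)) k / (pochR (α + 3 / 2) k * (k.factorial : ℝ))) *
          (X ^ 2 - C (γ ^ 2)) ^ k

/-- The normalization constants of the `-1` Meixner–Pollaczek orthogonality relation: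
`h_{2m} = m! e^{-γ²} Γ(m+α+1/2)`, `h_{2m+1} = m! e^{-γ²} Γ(m+α+3/2)`. -/
noncomputable def M1MPnorm (α γ : ℝ) (n : ℕ) : ℝ :=
  let m : ℕ := n / 2
  if Even n then (m.factorial : ℝ) * Real.exp (-γ ^ 2) * Real.Gamma ((m : ℝ) + α + 1 / 2)
  else (m.factorial : ℝ) * Real.exp (-γ ^ 2) * Real.Gamma ((m : ℝ) + α + 3 / 2)

open Real Set

lemma pochR_succ (a : ℝ) (k : ℕ) : pochR a (k + 1) = pochR a k * (a + k) :=
  ascPochhammer_succ_eval k a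

lemma pochR_pos {a : ℝ} (ha : 0 < a) (k : ℕ) : 0 < pochR a k :=
  ascPochhammer_pos k a ha

lemma pochR_neg_natCast (n k : ℕ) : pochR (-(n : ℝ)) k = (-1) ^ k * n.descFactorial k := by
  rw [pochR, ascPochhammer_eval_neg_eq_descPochhammer, descPochhammer_eval_eq_descFactorial]

lemma pochR_add (s : ℝ) (k j : ℕ) : pochR s (k + j) = pochR s k * pochR (s + k) j := by
  simp [pochR, ← ascPochhammer_mul, eval_comp]

lemma Gamma_add_natCast_eq_mul_pochR {s : ℝ} (hs : 0 < s) (k : ℕ) :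
    Gamma (s + k) = Gamma s * pochR s k := by
  induction k with
  | zero => simp [pochR]
  | succ k ih =>
    rw [Nat.cast_succ, ← add_assoc, Gamma_add_one (by positivity), ih, pochR_succ]
    ring

lemma alternating_sum_choose_mul_eval {P : ℝ[X]} {n : ℕ} (hP : P.natDegree ≤ n) :
    ∑ k ∈ range (n + 1), (-1) ^ k * (n.choose k : ℝ) * P.eval (k : ℝ)
      = (-1) ^ n * n.factorial * P.coeff n := by
  have hΔ : (fwdDiff 1)^[n] P.eval 0 = n.factorial * P.coeff n := by
    rcases hP.lt_or_eq with hlt | rfl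
    · simp [Polynomial.fwdDiff_iter_eq_zero_of_degree_lt hlt, coeff_eq_zero_of_natDegree_lt hlt]
    · simp [P.fwdDiff_iter_degree_eq_factorial, mul_comm]
  rw [mul_assoc, ← hΔ, fwdDiff_iter_eq_sum_shift, mul_sum]
  refine sum_congr rfl fun k hk => ?_
  obtain ⟨j, rfl⟩ := Nat.exists_eq_add_of_le (Nat.lt_succ_iff.mp (mem_range.mp hk))
  have hsign : ((-1 : ℝ) ^ j) ^ 2 = 1 := by rw [← pow_mul, mul_comm, pow_mul, neg_one_sq, one_pow]
  simp only [Nat.add_sub_cancel_left, zsmul_eq_mul, nsmul_eq_mul, mul_one, zero_add]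
  push_cast
  linear_combination (-(-1) ^ k * ((k + j).choose k : ℝ) * P.eval (k : ℝ)) * hsign

section GammaWeight

variable {s : ℝ}

lemma integrableOn_rpow_mul_exp_neg_mul_pow (hs : 0 < s) (k : ℕ) :
    IntegrableOn (fun t : ℝ => t ^ (s - 1) * exp (-t) * t ^ k) (Ioi 0) := by
  refine (GammaIntegral_convergent (by positivity : 0 < s + k)).congr_fun (fun t ht => ?_)
    measurableSet_Ioi
  dsimp only
  rw [show s + k - 1 = s - 1 + k by ring, rpow_add ht, rpow_natCast]
  ring

lemma integral_rpow_mul_exp_neg_mul_pow (hs : 0 < s) (k : ℕ) :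
    ∫ t in Ioi 0, t ^ (s - 1) * exp (-t) * t ^ k = Gamma (s + k) := by
  rw [Gamma_eq_integral (by positivity)]
  refine setIntegral_congr_fun measurableSet_Ioi fun t ht => ?_
  rw [show s + k - 1 = s - 1 + k by ring, rpow_add ht, rpow_natCast]
  ring

lemma integrableOn_rpow_mul_exp_neg_mul_eval (hs : 0 < s) (P : ℝ[X]) :
    IntegrableOn (fun t : ℝ => t ^ (s - 1) * exp (-t) * P.eval t) (Ioi 0) := by
  simp_rw [eval_eq_sum_range, mul_sum]
  exact integrable_finsetSum _ fun k _ => IntegrableOn.congr_fun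
    ((integrableOn_rpow_mul_exp_neg_mul_pow hs k).const_mul (P.coeff k))
    (fun t _ => by ring) measurableSet_Ioi

end GammaWeight

/-- `laguerre s a` is `₁F₁(-a; s; t) = a! L_a^{(s-1)}(t) / (s)_a`, the normalization in which
it appears in `M1MP`. -/
noncomputable def laguerre (s : ℝ) (a : ℕ) : ℝ[X] :=
  ∑ k ∈ range (a + 1), C (pochR (-(a : ℝ)) k / (pochR s k * k.factorial)) * X ^ k

section Laguerre

variable {s : ℝ}

lemma laguerre_eval (hs : 0 < s) (a : ℕ) (t : ℝ) :
    (laguerre s a).eval t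
      = ∑ k ∈ range (a + 1), (-1) ^ k * a.choose k / pochR s k * t ^ k := by
  simp only [laguerre, eval_finsetSum, eval_mul, eval_C, eval_pow, eval_X]
  refine sum_congr rfl fun k _ => ?_
  have := (pochR_pos hs k).ne'
  rw [pochR_neg_natCast, Nat.descFactorial_eq_factorial_mul_choose]
  field_simp
  push_cast
  ring

lemma integral_laguerre_moment (hs : 0 < s) {a j : ℕ} (hj : j ≤ a) :
    ∫ t in Ioi 0, t ^ (s - 1) * exp (-t) * t ^ j * (laguerre s a).eval t
      = if j = a then (-1) ^ a * a.factorial * Gamma s else 0 := by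
  -- `Γ(s + j + k) / (s)_k = Γ(s) (s + k)_j` is a polynomial of degree `j` in `k`.
  set q : ℝ[X] := (ascPochhammer ℝ j).comp (X + C s)
  have hq : q.natDegree = j := by
    rw [natDegree_comp, ascPochhammer_natDegree, natDegree_X_add_C, mul_one]
  have hq_coeff : q.coeff a = if j = a then 1 else 0 := by
    split_ifs with h
    · have := ((monic_ascPochhammer ℝ j).comp_X_add_C s).leadingCoeff
      rw [leadingCoeff, hq] at this
      rwa [← h]
    · exact coeff_eq_zero_of_natDegree_lt (by omega)
  have hterm : ∀ k, (-1) ^ k * a.choose k / pochR s k * Gamma (s + ↑(j + k))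
      = Gamma s * ((-1) ^ k * a.choose k * q.eval (k : ℝ)) := by
    intro k
    have hqk : q.eval (k : ℝ) = pochR (s + k) j := by
      simp only [q, pochR, eval_comp, eval_add, eval_X, eval_C]; rw [add_comm]
    have := (pochR_pos hs k).ne'
    rw [show s + ↑(j + k) = s + ↑(k + j) by rw [add_comm j], Gamma_add_natCast_eq_mul_pochR hs,
      pochR_add, hqk]
    field_simp
  calc ∫ t in Ioi 0, t ^ (s - 1) * exp (-t) * t ^ j * (laguerre s a).eval t
      = ∑ k ∈ range (a + 1), ∫ t in Ioi 0,
          (-1) ^ k * a.choose k / pochR s k * (t ^ (s - 1) * exp (-t) * t ^ (j + k)) := by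
        rw [← integral_finsetSum _ fun k _ =>
          (integrableOn_rpow_mul_exp_neg_mul_pow hs (j + k)).const_mul _]
        refine setIntegral_congr_fun measurableSet_Ioi fun t _ => ?_
        simp only [laguerre_eval hs, mul_sum, pow_add]
        exact sum_congr rfl fun k _ => by ring
    _ = Gamma s * ∑ k ∈ range (a + 1), (-1) ^ k * a.choose k * q.eval (k : ℝ) := by
        simp only [integral_const_mul, integral_rpow_mul_exp_neg_mul_pow hs, hterm, mul_sum]
    _ = if j = a then (-1) ^ a * a.factorial * Gamma s else 0 := by
        rw [alternating_sum_choose_mul_eval (hq.trans_le hj), hq_coeff]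
        split_ifs <;> ring

lemma integral_laguerre_mul_laguerre_of_le (hs : 0 < s) {a b : ℕ} (hab : a ≤ b) :
    ∫ t in Ioi 0, t ^ (s - 1) * exp (-t) * (laguerre s a).eval t * (laguerre s b).eval t
      = if a = b then a.factorial * Gamma s / pochR s a else 0 := by
  have hmoment : ∀ k ∈ range (a + 1), ∫ t in Ioi 0, (-1) ^ k * a.choose k / pochR s k *
        (t ^ (s - 1) * exp (-t) * t ^ k * (laguerre s b).eval t)
      = if k = b then (-1) ^ k * a.choose k / pochR s k * ((-1) ^ b * b.factorial * Gamma s)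
        else 0 := by
    intro k hk
    rw [integral_const_mul, integral_laguerre_moment hs (by grind)]
    split_ifs <;> simp
  calc ∫ t in Ioi 0, t ^ (s - 1) * exp (-t) * (laguerre s a).eval t * (laguerre s b).eval t
      = ∑ k ∈ range (a + 1), ∫ t in Ioi 0, (-1) ^ k * a.choose k / pochR s k *
          (t ^ (s - 1) * exp (-t) * t ^ k * (laguerre s b).eval t) := by
        rw [← integral_finsetSum _ fun k _ => IntegrableOn.congr_fun
          ((integrableOn_rpow_mul_exp_neg_mul_eval hs (X ^ k * laguerre s b)).const_mul
            ((-1) ^ k * a.choose k / pochR s k))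
          (fun t _ => by simp only [eval_mul, eval_pow, eval_X]; ring) measurableSet_Ioi]
        refine setIntegral_congr_fun measurableSet_Ioi fun t _ => ?_
        simp only [laguerre_eval hs a, mul_sum, sum_mul]
        exact sum_congr rfl fun k _ => by ring
    _ = if a = b then a.factorial * Gamma s / pochR s a else 0 := by
        rw [sum_congr rfl hmoment, sum_ite_eq' (range (a + 1)) b]
        rcases hab.lt_or_eq with hlt | rfl
        · rw [if_neg (by simpa using hlt), if_neg hlt.ne]
        · have := (pochR_pos hs a).ne'
          simp only [Finset.mem_range, Nat.lt_add_one, if_true, Nat.choose_self]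
          field_simp
          rw [Nat.cast_one, mul_one, ← pow_mul, mul_comm, pow_mul, neg_one_sq, one_pow]

lemma integral_laguerre_mul_laguerre (hs : 0 < s) (a b : ℕ) :
    ∫ t in Ioi 0, t ^ (s - 1) * exp (-t) * (laguerre s a).eval t * (laguerre s b).eval t
      = if a = b then a.factorial * Gamma s / pochR s a else 0 := by
  rcases le_total a b with hab | hba
  · exact integral_laguerre_mul_laguerre_of_le hs hab
  · simp_rw [mul_assoc _ ((laguerre s a).eval _), mul_comm ((laguerre s a).eval _), ← mul_assoc]
    rw [integral_laguerre_mul_laguerre_of_le hs hba]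
    rcases hba.lt_or_eq with hlt | rfl
    · rw [if_neg hlt.ne, if_neg hlt.ne']
    · rfl

end Laguerre

section SquareSubstitution

variable (γ : ℝ)

lemma image_sq_sub_sq_Ioi_abs : (fun x : ℝ => x ^ 2 - γ ^ 2) '' Ioi |γ| = (Ioi 0 : Set ℝ) := by
  ext u
  constructor
  · rintro ⟨x, hx, rfl⟩
    have := pow_lt_pow_left₀ (Set.mem_Ioi.mp hx) (abs_nonneg γ) two_ne_zero
    rw [sq_abs] at this
    exact sub_pos.mpr this
  · intro hu
    refine ⟨√(u + γ ^ 2), ?_, by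
      simp [sq_sqrt (by linarith [Set.mem_Ioi.mp hu, sq_nonneg γ] : 0 ≤ u + γ ^ 2)]⟩
    rw [Set.mem_Ioi, ← sqrt_sq_eq_abs]
    exact sqrt_lt_sqrt (sq_nonneg γ) (by linarith [Set.mem_Ioi.mp hu])

lemma injOn_sq_sub_sq_Ioi_abs : InjOn (fun x : ℝ => x ^ 2 - γ ^ 2) (Ioi |γ|) := by
  intro x hx y hy h
  have hx0 : 0 ≤ x := (abs_nonneg γ).trans (Set.mem_Ioi.mp hx).le
  have hy0 : 0 ≤ y := (abs_nonneg γ).trans (Set.mem_Ioi.mp hy).le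
  exact (sq_eq_sq₀ hx0 hy0).mp (sub_left_inj.mp h)

lemma hasDerivWithinAt_sq_sub_sq (x : ℝ) :
    HasDerivWithinAt (fun x : ℝ => x ^ 2 - γ ^ 2) (2 * x) (Ioi |γ|) x := by
  simpa using ((hasDerivAt_pow 2 x).sub_const (γ ^ 2)).hasDerivWithinAt

lemma abs_two_mul_smul_eq (h : ℝ → ℝ) :
    EqOn (fun x => |2 * x| • h (x ^ 2 - γ ^ 2)) (fun x => (2 * x) • h (x ^ 2 - γ ^ 2)) (Ioi |γ|) :=
  fun x hx => by dsimp only; rw [abs_of_pos (by linarith [abs_nonneg γ, Set.mem_Ioi.mp hx])]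

lemma integral_Ioi_abs_comp_sq_sub_sq (h : ℝ → ℝ) :
    ∫ x in Ioi |γ|, 2 * x * h (x ^ 2 - γ ^ 2) = ∫ u in Ioi 0, h u := by
  rw [← image_sq_sub_sq_Ioi_abs γ, integral_image_eq_integral_abs_deriv_smul measurableSet_Ioi
    (fun x _ => hasDerivWithinAt_sq_sub_sq γ x) (injOn_sq_sub_sq_Ioi_abs γ),
    setIntegral_congr_fun measurableSet_Ioi (abs_two_mul_smul_eq γ h)]
  rfl

lemma integrableOn_Ioi_abs_comp_sq_sub_sq_iff (h : ℝ → ℝ) :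
    IntegrableOn (fun x => 2 * x * h (x ^ 2 - γ ^ 2)) (Ioi |γ|) ↔ IntegrableOn h (Ioi 0) := by
  rw [← image_sq_sub_sq_Ioi_abs γ, integrableOn_image_iff_integrableOn_abs_deriv_smul
    measurableSet_Ioi (fun x _ => hasDerivWithinAt_sq_sub_sq γ x) (injOn_sq_sub_sq_Ioi_abs γ),
    integrableOn_congr_fun (abs_two_mul_smul_eq γ h) measurableSet_Ioi]
  rfl

end SquareSubstitution

lemma integral_setOf_le_abs {E : Type*} [NormedAddCommGroup E] [NormedSpace ℝ E] {c : ℝ}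
    (hc : 0 ≤ c) {f : ℝ → E} (hf : IntegrableOn f (Ioi c))
    (hf_neg : IntegrableOn (fun x => f (-x)) (Ioi c)) :
    ∫ x in {x | c ≤ |x|}, f x = ∫ x in Ioi c, (f x + f (-x)) := by
  have hset : {x : ℝ | c ≤ |x|} = Iic (-c) ∪ Ici c := by
    ext x
    simp [le_abs', or_comm]
  have hdisj : AEDisjoint volume (Iic (-c)) (Ici c) := by
    refine measure_mono_null (t := Icc c (-c)) (fun x hx => ⟨hx.2, hx.1⟩) ?_
    rw [Real.volume_Icc, ENNReal.ofReal_eq_zero]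
    linarith
  have hf_Iic : IntegrableOn f (Iic (-c)) := by
    have h := (integrableOn_Ici_iff_integrableOn_Ioi).mpr hf_neg
    rw [← neg_neg c] at h
    simpa using h.comp_neg_Iic
  rw [hset, setIntegral_union₀ hdisj measurableSet_Ici.nullMeasurableSet hf_Iic
    ((integrableOn_Ici_iff_integrableOn_Ioi).mpr hf), ← integral_comp_neg_Ioi,
    integral_Ici_eq_integral_Ioi, integral_add hf hf_neg, add_comm]

lemma exp_neg_sq_eq_mul (x γ : ℝ) : exp (-x ^ 2) = exp (-γ ^ 2) * exp (-(x ^ 2 - γ ^ 2)) := by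
  rw [← exp_add]; ring_nf

lemma exists_abs_eval_le_eval_sq (P : ℝ[X]) : ∃ B : ℝ[X], ∀ x, |P.eval x| ≤ B.eval (x ^ 2) := by
  refine ⟨∑ k ∈ range (P.natDegree + 1), C |P.coeff k| * (1 + X) ^ k, fun x => ?_⟩
  rw [eval_eq_sum_range, eval_finsetSum]
  refine (abs_sum_le_sum_abs _ _).trans (sum_le_sum fun k _ => ?_)
  simp only [abs_mul, abs_pow, eval_mul, eval_C, eval_pow, eval_add, eval_one, eval_X]
  gcongr
  nlinarith [sq_abs x, sq_nonneg (|x| - 1)]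

lemma integrableOn_Ioi_abs_add_mul_rpow_mul_exp_mul_eval {s γ δ : ℝ} (hs : 0 < s)
    (hδ : |δ| ≤ |γ|) (R : ℝ[X]) :
    IntegrableOn (fun x => (x + δ) * (x ^ 2 - γ ^ 2) ^ (s - 1) * exp (-x ^ 2) * R.eval x)
      (Ioi |γ|) := by
  obtain ⟨B, hB⟩ := exists_abs_eval_le_eval_sq R
  have hdom := (integrableOn_Ioi_abs_comp_sq_sub_sq_iff γ _).mpr
    ((integrableOn_rpow_mul_exp_neg_mul_eval hs (B.comp (X + C (γ ^ 2)))).const_mul (exp (-γ ^ 2)))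
  refine hdom.mono' (by fun_prop) ?_
  filter_upwards [ae_restrict_mem measurableSet_Ioi] with x hx
  have hγx : |γ| < x := hx
  have hu : 0 ≤ x ^ 2 - γ ^ 2 := by nlinarith [sq_abs γ, abs_nonneg γ]
  have hδx : |x + δ| ≤ 2 * x := by
    rw [abs_le]; constructor <;> linarith [abs_le.mp hδ, neg_abs_le δ, le_abs_self δ]
  simp only [norm_mul, Real.norm_eq_abs, abs_of_nonneg (rpow_nonneg hu _), abs_exp, eval_comp,
    eval_add, eval_X, eval_C, sub_add_cancel]
  rw [exp_neg_sq_eq_mul x γ]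
  calc _ ≤ 2 * x * (x ^ 2 - γ ^ 2) ^ (s - 1) * (exp (-γ ^ 2) * exp (-(x ^ 2 - γ ^ 2)))
        * B.eval (x ^ 2) := by
        have := rpow_nonneg hu (s - 1)
        have hx0 : 0 ≤ x := (abs_nonneg γ).trans hγx.le
        gcongr
        exact hB x
    _ = _ := by ring

noncomputable def m1Weight (α γ x : ℝ) : ℝ :=
  Real.sign x * (x + γ) * (x ^ 2 - γ ^ 2) ^ (α - 1 / 2) * Real.exp (-x ^ 2)

section Weight

variable {α γ : ℝ}

lemma integrableOn_m1Weight_mul (hα : -(1 / 2) < α) (P Q : ℝ[X]) :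
    IntegrableOn (fun x => m1Weight α γ x * P.eval x * Q.eval x) (Ioi |γ|) := by
  have := integrableOn_Ioi_abs_add_mul_rpow_mul_exp_mul_eval (s := α + 1 / 2) (γ := γ) (δ := γ)
    (by linarith) le_rfl (P * Q)
  refine this.congr_fun (fun x hx => ?_) measurableSet_Ioi
  have hx0 : 0 < x := (abs_nonneg γ).trans_lt hx
  simp only [m1Weight, sign_of_pos hx0, eval_mul]
  ring_nf

lemma integrableOn_m1Weight_mul_comp_neg (hα : -(1 / 2) < α) (P Q : ℝ[X]) :
    IntegrableOn (fun x => m1Weight α γ (-x) * P.eval (-x) * Q.eval (-x)) (Ioi |γ|) := by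
  have := integrableOn_Ioi_abs_add_mul_rpow_mul_exp_mul_eval (s := α + 1 / 2) (γ := γ) (δ := -γ)
    (by linarith) (abs_neg γ).le ((P * Q).comp (-X))
  refine this.congr_fun (fun x hx => ?_) measurableSet_Ioi
  have hx0 : 0 < x := (abs_nonneg γ).trans_lt hx
  simp only [m1Weight, sign_of_neg (neg_neg_of_pos hx0), eval_comp, eval_mul, eval_neg, eval_X,
    neg_sq]
  ring_nf

lemma integral_m1Weight_mul (hα : -(1 / 2) < α) (P Q : ℝ[X]) :
    ∫ x in {x | |γ| ≤ |x|}, m1Weight α γ x * P.eval x * Q.eval x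
      = ∫ x in Ioi |γ|, (m1Weight α γ x * P.eval x * Q.eval x
          + m1Weight α γ (-x) * P.eval (-x) * Q.eval (-x)) :=
  integral_setOf_le_abs (abs_nonneg γ) (integrableOn_m1Weight_mul hα P Q)
    (integrableOn_m1Weight_mul_comp_neg hα P Q)

end Weight

lemma M1MP_two_mul (α γ : ℝ) (a : ℕ) :
    M1MP α γ (2 * a) = C ((-1) ^ a * pochR (α + 1 / 2) a)
      * (laguerre (α + 1 / 2) a).comp (X ^ 2 - C (γ ^ 2)) := by
  simp [M1MP, laguerre, Polynomial.sum_comp]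

lemma M1MP_two_mul_add_one (α γ : ℝ) (a : ℕ) :
    M1MP α γ (2 * a + 1) = C ((-1) ^ a * pochR (α + 3 / 2) a) * (X - C γ)
      * (laguerre (α + 3 / 2) a).comp (X ^ 2 - C (γ ^ 2)) := by
  simp [M1MP, laguerre, Polynomial.sum_comp, show (2 * a + 1) / 2 = a by omega]

/-- The integrand in `u = x² - γ²` left after folding `x ↦ -x` for two indices of equal parity. -/
noncomputable def foldedIntegrand (s γ : ℝ) (a b : ℕ) (u : ℝ) : ℝ :=
  (-1) ^ a * pochR s a * ((-1) ^ b * pochR s b) * exp (-γ ^ 2) *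
    (u ^ (s - 1) * exp (-u) * (laguerre s a).eval u * (laguerre s b).eval u)

lemma integral_foldedIntegrand {s : ℝ} (hs : 0 < s) (γ : ℝ) (a b : ℕ) :
    ∫ u in Ioi 0, foldedIntegrand s γ a b u
      = if a = b then a.factorial * exp (-γ ^ 2) * Gamma (a + s) else 0 := by
  simp only [foldedIntegrand]
  rw [integral_const_mul, integral_laguerre_mul_laguerre hs]
  split_ifs with hab
  · subst hab
    have := (pochR_pos hs a).ne'
    rw [add_comm, Gamma_add_natCast_eq_mul_pochR hs]
    field_simp
    rw [← pow_mul, mul_comm, pow_mul, neg_one_sq, one_pow]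
  · rw [mul_zero]

section Fold

variable {α γ x : ℝ}

lemma m1Weight_fold_two_mul (hx : |γ| < x) (a b : ℕ) :
    m1Weight α γ x * (M1MP α γ (2 * a)).eval x * (M1MP α γ (2 * b)).eval x
      + m1Weight α γ (-x) * (M1MP α γ (2 * a)).eval (-x) * (M1MP α γ (2 * b)).eval (-x)
      = 2 * x * foldedIntegrand (α + 1 / 2) γ a b (x ^ 2 - γ ^ 2) := by
  have hx0 : 0 < x := (abs_nonneg γ).trans_lt hx
  simp only [m1Weight, foldedIntegrand, M1MP_two_mul, eval_mul, eval_C, eval_comp, eval_sub,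
    eval_pow, eval_X, neg_sq, sign_of_pos hx0, sign_of_neg (neg_neg_of_pos hx0),
    exp_neg_sq_eq_mul x γ, show α + 1 / 2 - 1 = α - 1 / 2 by ring]
  ring

lemma m1Weight_fold_two_mul_add_one (hx : |γ| < x) (a b : ℕ) :
    m1Weight α γ x * (M1MP α γ (2 * a + 1)).eval x * (M1MP α γ (2 * b + 1)).eval x
      + m1Weight α γ (-x) * (M1MP α γ (2 * a + 1)).eval (-x) * (M1MP α γ (2 * b + 1)).eval (-x)
      = 2 * x * foldedIntegrand (α + 3 / 2) γ a b (x ^ 2 - γ ^ 2) := by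
  have hx0 : 0 < x := (abs_nonneg γ).trans_lt hx
  have hu : 0 < x ^ 2 - γ ^ 2 := by nlinarith [sq_abs γ, abs_nonneg γ]
  simp only [m1Weight, foldedIntegrand, M1MP_two_mul_add_one, eval_mul, eval_C, eval_comp,
    eval_sub, eval_pow, eval_X, neg_sq, sign_of_pos hx0, sign_of_neg (neg_neg_of_pos hx0),
    exp_neg_sq_eq_mul x γ, show α + 3 / 2 - 1 = α - 1 / 2 + 1 by ring, rpow_add hu, rpow_one]
  ring

lemma m1Weight_fold_two_mul_two_mul_add_one (hx : |γ| < x) (a b : ℕ) :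
    m1Weight α γ x * (M1MP α γ (2 * a)).eval x * (M1MP α γ (2 * b + 1)).eval x
      + m1Weight α γ (-x) * (M1MP α γ (2 * a)).eval (-x) * (M1MP α γ (2 * b + 1)).eval (-x)
      = 0 := by
  have hx0 : 0 < x := (abs_nonneg γ).trans_lt hx
  simp only [m1Weight, M1MP_two_mul, M1MP_two_mul_add_one, eval_mul, eval_C, eval_comp, eval_sub,
    eval_pow, eval_X, neg_sq, sign_of_pos hx0, sign_of_neg (neg_neg_of_pos hx0)]
  ring

lemma m1Weight_fold_two_mul_add_one_two_mul (hx : |γ| < x) (a b : ℕ) :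
    m1Weight α γ x * (M1MP α γ (2 * a + 1)).eval x * (M1MP α γ (2 * b)).eval x
      + m1Weight α γ (-x) * (M1MP α γ (2 * a + 1)).eval (-x) * (M1MP α γ (2 * b)).eval (-x)
      = 0 := by
  have hx0 : 0 < x := (abs_nonneg γ).trans_lt hx
  simp only [m1Weight, M1MP_two_mul, M1MP_two_mul_add_one, eval_mul, eval_C, eval_comp, eval_sub,
    eval_pow, eval_X, neg_sq, sign_of_pos hx0, sign_of_neg (neg_neg_of_pos hx0)]
  ring

end Fold

lemma M1MPnorm_two_mul (α γ : ℝ) (a : ℕ) :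
    M1MPnorm α γ (2 * a) = a.factorial * exp (-γ ^ 2) * Gamma (a + (α + 1 / 2)) := by
  simp [M1MPnorm, add_assoc]

lemma M1MPnorm_two_mul_add_one (α γ : ℝ) (a : ℕ) :
    M1MPnorm α γ (2 * a + 1) = a.factorial * exp (-γ ^ 2) * Gamma (a + (α + 3 / 2)) := by
  simp [M1MPnorm, add_assoc, show (2 * a + 1) / 2 = a by omega]

/-- the orthogonality relation of the `-1` Meixner–Pollaczek polynomials
on `(-∞,-|γ|] ∪ [|γ|,∞)` with weight `sgn(x)(x+γ)(x²-γ²)^{α-1/2} e^{-x²}`. -/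
theorem M1MeixnerPollaczek_orthogonality (α γ : ℝ) (hα : α > -(1 / 2)) (n m : ℕ) :
    ∫ x in {x : ℝ | |γ| ≤ |x|},
        Real.sign x * (x + γ) * (x ^ 2 - γ ^ 2) ^ (α - 1 / 2) * Real.exp (-x ^ 2) *
          (M1MP α γ n).eval x * (M1MP α γ m).eval x
      = if n = m then M1MPnorm α γ n else 0 := by
  change ∫ x in {x : ℝ | |γ| ≤ |x|}, m1Weight α γ x * _ * _ = _
  rw [integral_m1Weight_mul hα]
  obtain ⟨a, rfl | rfl⟩ := Nat.even_or_odd' n <;> obtain ⟨b, rfl | rfl⟩ := Nat.even_or_odd' m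
  · rw [setIntegral_congr_fun measurableSet_Ioi fun x hx => m1Weight_fold_two_mul hx a b,
      integral_Ioi_abs_comp_sq_sub_sq, integral_foldedIntegrand (by linarith)]
    simp [M1MPnorm_two_mul]
  · rw [setIntegral_congr_fun measurableSet_Ioi
      fun x hx => m1Weight_fold_two_mul_two_mul_add_one hx a b, integral_zero, if_neg (by omega)]
  · rw [setIntegral_congr_fun measurableSet_Ioi
      fun x hx => m1Weight_fold_two_mul_add_one_two_mul hx a b, integral_zero, if_neg (by omega)]
  · rw [setIntegral_congr_fun measurableSet_Ioi fun x hx => m1Weight_fold_two_mul_add_one hx a b,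
      integral_Ioi_abs_comp_sq_sub_sq, integral_foldedIntegrand (by linarith)]
    simp [M1MPnorm_two_mul_add_one]
end

section
/- Let a, b ∈ ℂ with Re(a) > 0 and Re(b) > 0. Define the symmetric Bannai–Ito polynomials by Ŝ_{2m}(x;a,b) = (−1)^m (a)_m(b)_m · Σ_{k=0}^{m} [(−m)_k/((a)_k(b)_k k!)] · Π_{j=0}^{k−1}(j²+x²) and Ŝ_{2m+1}(x;a,b) = (−1)^m (1+a)_m(1+b)_m · x · Σ_{k=0}^{m} [(−m)_k/((1+a)_k(1+b)_k k!)] · Π_{j=1}^{k}(j²+x²). Then for every n ≥ 1, x·Ŝ_n(x;a,b) = Ŝ_{n+1}(x;a,b) + τ_n·Ŝ_{n−1}(x;a,b) as polynomials in x, where τ_{2m} = m(m+a+b−1) and τ_{2m+1} = (m+a)(m+b); moreover x·Ŝ_0 = Ŝ_1. -/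
open Polynomial Finset Complex

/-- The Pochhammer symbol `(a)ₖ = a(a+1)⋯(a+k-1)` for complex `a`. -/
noncomputable def pochC (a : ℂ) (k : ℕ) : ℂ := (ascPochhammer ℂ k).eval a

/-- The symmetric Bannai–Ito polynomials `Ŝₙ(x;a,b)`, given by their
continuous-dual-Hahn-type terminating ₃F₂ hypergeometric expressions. -/
noncomputable def symBI (a b : ℂ) (n : ℕ) : Polynomial ℂ :=
  let m : ℕ := n / 2
  if Even n then
    C ((-1 : ℂ) ^ m * pochC a m * pochC b m) *
      ∑ k ∈ range (m + 1),
        C (pochC (-(m : ℂ)) k / (pochC a k * pochC b k * (k.factorial : ℂ))) *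
          ∏ j ∈ range k, (C ((j : ℂ) ^ 2) + X ^ 2)
  else
    C ((-1 : ℂ) ^ m * pochC (1 + a) m * pochC (1 + b) m) * X *
      ∑ k ∈ range (m + 1),
        C (pochC (-(m : ℂ)) k / (pochC (1 + a) k * pochC (1 + b) k * (k.factorial : ℂ))) *
          ∏ j ∈ Icc 1 k, (C ((j : ℂ) ^ 2) + X ^ 2)

/-- The recurrence coefficients `τₙ` of the symmetric Bannai–Ito polynomials:
`τ_{2m} = m(m+a+b-1)`, `τ_{2m+1} = (m+a)(m+b)`. -/
noncomputable def symBItau (a b : ℂ) (n : ℕ) : ℂ :=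
  let m : ℕ := n / 2
  if Even n then (m : ℂ) * ((m : ℂ) + a + b - 1)
  else ((m : ℂ) + a) * ((m : ℂ) + b)

/-!
In the bases `Q k = ∏_{j<k} (j² + x²)` and `P k = ∏_{j=1}^{k} (j² + x²)` (that is,
`(ix)ₖ(-ix)ₖ` and `(1+ix)ₖ(1-ix)ₖ`), multiplication by `x` moves between the even and odd
polynomials: `x² P k = Q (k+1)` and `Q (k+1) = P (k+1) - (k+1)² P k`. Comparing coefficients,
both halves of the recurrence reduce to contiguous relations between the coefficients
`(-1)^m (a)ₘ(b)ₘ (-m)ₖ / ((a)ₖ(b)ₖ k!)`, which are rational identities once the Pochhammer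
symbols of `a` and `b` are nonzero; `Re a, Re b > 0` guarantees this.
-/

open scoped Nat

lemma pochC_succ (x : ℂ) (k : ℕ) : pochC x (k + 1) = pochC x k * (x + k) :=
  ascPochhammer_succ_eval k x

lemma pochC_succ_left (x : ℂ) (k : ℕ) : pochC x (k + 1) = x * pochC (1 + x) k := by
  simp [pochC, ascPochhammer_succ_left, eval_comp, add_comm x]

lemma pochC_mul_add_natCast (x : ℂ) (k : ℕ) : pochC x k * (x + k) = x * pochC (1 + x) k := by
  rw [← pochC_succ, pochC_succ_left]

lemma pochC_one_add {x : ℂ} (hx : x ≠ 0) (k : ℕ) :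
    pochC (1 + x) k = pochC x k * (x + k) / x := by
  rw [pochC_mul_add_natCast, mul_div_cancel_left₀ _ hx]

lemma pochC_ne_zero {x : ℂ} (hx : ∀ n : ℕ, x ≠ -n) (k : ℕ) : pochC x k ≠ 0 := by
  simp only [pochC, ne_eq, ascPochhammer_eval_eq_zero_iff, not_exists, not_and]
  exact fun n _ h => hx n (by rw [h, neg_neg])

lemma pochC_neg_natCast_of_lt {m k : ℕ} (h : m < k) : pochC (-(m : ℂ)) k = 0 :=
  ascPochhammer_eval_neg_coe_nat_of_lt h

lemma ne_neg_natCast_of_re_pos {z : ℂ} (hz : 0 < z.re) (n : ℕ) : z ≠ -n := by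
  rintro rfl
  simp only [neg_re, natCast_re, Left.neg_pos_iff] at hz
  exact hz.not_ge n.cast_nonneg

/-- The coefficient of `evenBasis k` in `symBI a b (2 * m)`; that of `oddBasis k` in
`symBI a b (2 * m + 1) / X` is `symBICoeff (1 + a) (1 + b) m k`. -/
noncomputable def symBICoeff (a b : ℂ) (m k : ℕ) : ℂ :=
  (-1) ^ m * pochC a m * pochC b m * (pochC (-(m : ℂ)) k / (pochC a k * pochC b k * k !))

section Coeff

variable {a b : ℂ}

lemma symBICoeff_eq_zero_of_lt (m : ℕ) {k : ℕ} (h : m < k) : symBICoeff a b m k = 0 := by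
  simp [symBICoeff, pochC_neg_natCast_of_lt h]

lemma symBICoeff_succ_zero (m : ℕ) :
    symBICoeff a b (m + 1) 0 + (m + a) * (m + b) * symBICoeff a b m 0 = 0 := by
  simp only [symBICoeff, pochC_succ]
  simp only [pochC, ascPochhammer_zero, eval_one]
  ring

lemma symBICoeff_succ_succ (ha : a ≠ 0) (hb : b ≠ 0) (m k : ℕ) :
    symBICoeff a b (m + 1) (k + 1) + (m + a) * (m + b) * symBICoeff a b m (k + 1) =
      symBICoeff (1 + a) (1 + b) m k := by
  have hm : pochC (-((m + 1 : ℕ) : ℂ)) (k + 1) = -(m + 1) * pochC (-(m : ℂ)) k := by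
    rw [pochC_succ_left]; push_cast; ring_nf
  simp only [symBICoeff, pochC_one_add ha, pochC_one_add hb, hm, pochC_succ, Nat.factorial_succ]
  push_cast
  field_simp
  ring

lemma symBICoeff_sub_succ (ha : ∀ n : ℕ, a ≠ -n) (hb : ∀ n : ℕ, b ≠ -n) (m k : ℕ) :
    symBICoeff a b (m + 1) k - (k + 1) ^ 2 * symBICoeff a b (m + 1) (k + 1) =
      symBICoeff (1 + a) (1 + b) (m + 1) k +
        (m + 1) * (m + a + b) * symBICoeff (1 + a) (1 + b) m k := by
  have ha0 : a ≠ 0 := by simpa using ha 0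
  have hb0 : b ≠ 0 := by simpa using hb 0
  have hak : a + k ≠ 0 := fun h => ha k (eq_neg_of_add_eq_zero_left h)
  have hbk : b + k ≠ 0 := fun h => hb k (eq_neg_of_add_eq_zero_left h)
  have hA := pochC_ne_zero ha k
  have hB := pochC_ne_zero hb k
  have hk : (k ! : ℂ) ≠ 0 := Nat.cast_ne_zero.mpr k.factorial_ne_zero
  have hm : pochC (-(m : ℂ)) k = (m + 1 - k) * pochC (-((m + 1 : ℕ) : ℂ)) k / (m + 1) := by
    have h := pochC_mul_add_natCast (-((m + 1 : ℕ) : ℂ)) k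
    push_cast at h ⊢
    rw [show 1 + -((m : ℂ) + 1) = -m by ring] at h
    field_simp
    linear_combination h
  simp only [symBICoeff, pochC_one_add ha0, pochC_one_add hb0, pochC_succ, hm, Nat.factorial_succ]
  push_cast
  field_simp
  ring

end Coeff

noncomputable def evenBasis (k : ℕ) : ℂ[X] := ∏ j ∈ range k, (C ((j : ℂ) ^ 2) + X ^ 2)

noncomputable def oddBasis (k : ℕ) : ℂ[X] := ∏ j ∈ Icc 1 k, (C ((j : ℂ) ^ 2) + X ^ 2)

lemma evenBasis_zero : evenBasis 0 = 1 := prod_range_zero _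

lemma oddBasis_zero : oddBasis 0 = 1 := by simp [oddBasis]

lemma oddBasis_succ (k : ℕ) :
    oddBasis (k + 1) = oddBasis k * (C (((k : ℂ) + 1) ^ 2) + X ^ 2) := by
  rw [oddBasis, oddBasis, prod_Icc_succ_top (by omega)]
  push_cast; rfl

lemma evenBasis_succ (k : ℕ) : evenBasis (k + 1) = X ^ 2 * oddBasis k := by
  induction k with
  | zero => simp [evenBasis, oddBasis_zero]
  | succ k ih =>
    rw [evenBasis, prod_range_succ, ← evenBasis, ih, oddBasis_succ]
    push_cast; ring

lemma evenBasis_succ_eq_sub (k : ℕ) :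
    evenBasis (k + 1) = oddBasis (k + 1) - C (((k : ℂ) + 1) ^ 2) * oddBasis k := by
  rw [evenBasis_succ, oddBasis_succ]; ring

lemma sum_evenBasis_eq_sum_oddBasis (f : ℕ → ℂ) (n : ℕ) :
    ∑ k ∈ range (n + 1), C (f k) * evenBasis k =
      ∑ k ∈ range (n + 1), C (f k - ((k : ℂ) + 1) ^ 2 * f (k + 1)) * oddBasis k +
        C (((n : ℂ) + 1) ^ 2 * f (n + 1)) * oddBasis n := by
  induction n with
  | zero => simp [evenBasis_zero, oddBasis_zero]
  | succ n ih =>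
    rw [sum_range_succ, ih, sum_range_succ _ (n + 1), evenBasis_succ_eq_sub]
    simp only [C_sub, C_mul, C_pow, C_add, C_1, Nat.cast_add, Nat.cast_one]
    ring

lemma C_mul_add_C_mul_C_mul (x t y : ℂ) (p : ℂ[X]) :
    C x * p + C t * (C y * p) = C (x + t * y) * p := by
  simp only [C_add, C_mul]; ring

lemma sum_range_symBICoeff_mul_succ (a b : ℂ) (m : ℕ) (p : ℕ → ℂ[X]) :
    ∑ k ∈ range (m + 1), C (symBICoeff a b m k) * p k =
      ∑ k ∈ range (m + 2), C (symBICoeff a b m k) * p k := by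
  rw [sum_range_succ _ (m + 1), symBICoeff_eq_zero_of_lt m (Nat.lt_succ_self m), C_0, zero_mul,
    add_zero]

lemma symBI_two_mul (a b : ℂ) (m : ℕ) :
    symBI a b (2 * m) = ∑ k ∈ range (m + 1), C (symBICoeff a b m k) * evenBasis k := by
  have hm : 2 * m / 2 = m := by omega
  simp only [symBI, hm, even_two_mul, if_true, mul_sum, symBICoeff, C_mul, evenBasis]
  exact sum_congr rfl fun k _ => by ring

lemma symBI_two_mul_add_one (a b : ℂ) (m : ℕ) :
    symBI a b (2 * m + 1) =
      X * ∑ k ∈ range (m + 1), C (symBICoeff (1 + a) (1 + b) m k) * oddBasis k := by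
  have hm : (2 * m + 1) / 2 = m := by omega
  simp only [symBI, hm, Nat.not_even_two_mul_add_one, if_false, mul_sum, symBICoeff, C_mul,
    oddBasis]
  exact sum_congr rfl fun k _ => by ring

lemma symBI_zero (a b : ℂ) : symBI a b 0 = 1 := by
  simp [symBI, pochC]

lemma symBI_one (a b : ℂ) : symBI a b 1 = X := by
  simp [symBI, pochC]

lemma symBItau_two_mul (a b : ℂ) (m : ℕ) : symBItau a b (2 * m) = m * (m + a + b - 1) := by
  simp [symBItau]

lemma symBItau_two_mul_add_one (a b : ℂ) (m : ℕ) :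
    symBItau a b (2 * m + 1) = (m + a) * (m + b) := by
  have hm : (2 * m + 1) / 2 = m := by omega
  simp [symBItau, hm]

lemma X_mul_symBI_two_mul_add_one {a b : ℂ} (ha : a ≠ 0) (hb : b ≠ 0) (m : ℕ) :
    X * symBI a b (2 * m + 1) =
      symBI a b (2 * m + 2) + C (symBItau a b (2 * m + 1)) * symBI a b (2 * m) := by
  have hX : X * (X * ∑ k ∈ range (m + 1), C (symBICoeff (1 + a) (1 + b) m k) * oddBasis k) =
      ∑ k ∈ range (m + 1), C (symBICoeff (1 + a) (1 + b) m k) * evenBasis (k + 1) := by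
    simp only [mul_sum, evenBasis_succ]
    exact sum_congr rfl fun k _ => by ring
  rw [symBI_two_mul_add_one, show 2 * m + 2 = 2 * (m + 1) by ring, symBI_two_mul, symBI_two_mul,
    symBItau_two_mul_add_one, sum_range_symBICoeff_mul_succ a b m, hX, mul_sum,
    ← sum_add_distrib]
  simp only [C_mul_add_C_mul_C_mul]
  conv_rhs => rw [sum_range_succ', symBICoeff_succ_zero, C_0, zero_mul, add_zero]
  simp only [symBICoeff_succ_succ ha hb]

lemma X_mul_symBI_two_mul_add_two {a b : ℂ} (ha : ∀ n : ℕ, a ≠ -n) (hb : ∀ n : ℕ, b ≠ -n)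
    (m : ℕ) :
    X * symBI a b (2 * m + 2) =
      symBI a b (2 * m + 3) + C (symBItau a b (2 * m + 2)) * symBI a b (2 * m + 1) := by
  rw [show 2 * m + 2 = 2 * (m + 1) by ring, show 2 * m + 3 = 2 * (m + 1) + 1 by ring,
    symBI_two_mul, symBI_two_mul_add_one, symBI_two_mul_add_one, symBItau_two_mul,
    sum_evenBasis_eq_sum_oddBasis, symBICoeff_eq_zero_of_lt (m + 1) (Nat.lt_succ_self _),
    mul_zero, C_0, zero_mul, add_zero, sum_range_symBICoeff_mul_succ (1 + a) (1 + b) m,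
    mul_left_comm, ← mul_add]
  congr 1
  rw [mul_sum, ← sum_add_distrib]
  refine sum_congr rfl fun k _ => ?_
  rw [C_mul_add_C_mul_C_mul, symBICoeff_sub_succ ha hb]
  congr 2
  push_cast
  ring

/-- the explicit symmetric Bannai–Ito polynomials satisfy the symmetric
monic three-term recurrence `x Ŝₙ = Ŝ_{n+1} + τₙ Ŝ_{n-1}` (and `x Ŝ₀ = Ŝ₁`). -/
theorem symBannaiIto_recurrence (a b : ℂ) (ha : a.re > 0) (hb : b.re > 0) :
    (∀ n : ℕ, 1 ≤ n →
      X * symBI a b n = symBI a b (n + 1) + C (symBItau a b n) * symBI a b (n - 1)) ∧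
    X * symBI a b 0 = symBI a b 1 := by
  have ha' := ne_neg_natCast_of_re_pos ha
  have hb' := ne_neg_natCast_of_re_pos hb
  refine ⟨fun n hn => ?_, by rw [symBI_zero, symBI_one, mul_one]⟩
  obtain ⟨m, rfl | rfl⟩ : ∃ m, n = 2 * m + 1 ∨ n = 2 * m + 2 := ⟨(n - 1) / 2, by omega⟩
  · exact X_mul_symBI_two_mul_add_one (ne_zero_of_re_pos ha) (ne_zero_of_re_pos hb) m
  · exact X_mul_symBI_two_mul_add_two ha' hb' m
end
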